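/- arXiv:1007.3604 — 2 statements merged into one kernel-verified Lean document; each statement's English description precedes it below -/
import Mathlib

section
/- Let m ≥ 1, A ∈ {0,1}^{m×n} a binary matrix, b ∈ ℕ₊^m a vector of positive integers, and W ≥ 1 with W ≤ b_i for all i ∈ [m]. Let f : 2^[n] → ℝ₊ be a normalized monotone submodular set function and set λ = e^{W+1}·m. Let ∅ = S_0 ⊂ S_1 ⊂ ⋯ ⊂ S_t ⊆ [n] be a chain with S_ℓ = S_{ℓ−1} ∪ {γ_ℓ}, γ_ℓ ∉ S_{ℓ−1}, and define weights w_{iℓ} = (1/b_i)·λ^{(Σ_{j∈S_ℓ} A_{ij})/(b_i+1)} (so w_{i0} = 1/b_i). Assume for every ℓ ∈ {1,…,t}: (i) δ_ℓ := f(S_ℓ) − f(S_{ℓ−1}) > 0, and (ii) f_{S_{ℓ−1}}(j) · Σ_{i=1}^m A_{iγ_ℓ} w_{i(ℓ−1)} ≤ δ_ℓ · Σ_{i=1}^m A_{ij} w_{i(ℓ−1)} for every j ∈ [n]∖S_{ℓ−1}. Let S* ⊆ [n] be feasible (Σ_{j∈S*} A_{ij} ≤ b_i for all i) with f(S*) >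 f(S_t). If Σ_{i=1}^m b_i w_{it} ≥ e^{W+1}·m, then f(S_t) ≥ f(S*) / (e·m^{1/(W+1)} + 1). -/
/-!
The potential `Φ(S) = ∑ᵢ bᵢ wᵢ(S)` starts at `m`. Adding `γ` to `S` multiplies `bᵢ wᵢ` by
`λ^{1/(bᵢ+1)}` in each row containing `γ`, and Bernoulli's inequality bounds `bᵢ (λ^{1/(bᵢ+1)} - 1)`
by `(W+1) λ^{1/(W+1)} = (W+1) c` with `c = e m^{1/(W+1)}`; so `Φ` grows by at most `(W+1) c` times
the cost `∑ᵢ A_{iγ} wᵢ(S)` of `γ`. The greedy rule, submodularity and feasibility of `S*` bound that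
cost by `δ Φ(S) / (f(S*) - f(S_t))`, whence `Φ(S_t) ≤ m exp((W+1) c f(S_t) / (f(S*) - f(S_t)))`.
The termination condition `Φ(S_t) ≥ e^{W+1} m` then forces `f(S*) - f(S_t) ≤ c f(S_t)`.
-/

open Finset Real

section Submodular

variable {α : Type*} [DecidableEq α] {f : Finset α → ℝ}

theorem le_add_sum_marginal_of_submodular
    (hsub : ∀ S T : Finset α, f (S ∪ T) + f (S ∩ T) ≤ f S + f T) (S U : Finset α) :
    f (S ∪ U) ≤ f S + ∑ j ∈ U, (f (insert j S) - f S) := by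
  induction U using Finset.induction_on with
  | empty => simp
  | insert a U ha ih =>
    have hunion : S ∪ insert a U = (S ∪ U) ∪ insert a S := by grind
    have hinter : (S ∪ U) ∩ insert a S = S := by grind
    have := hsub (S ∪ U) (insert a S)
    rw [hunion, sum_insert ha]
    rw [hinter] at this
    linarith

theorem sub_le_sum_marginal_of_submodular (hmono : Monotone f)
    (hsub : ∀ S T : Finset α, f (S ∪ T) + f (S ∩ T) ≤ f S + f T) (S T : Finset α) :
    f T - f S ≤ ∑ j ∈ T \ S, (f (insert j S) - f S) := by
  have := le_add_sum_marginal_of_submodular hsub S (T \ S)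
  rw [union_sdiff_self_eq_union] at this
  linarith [hmono (subset_union_right : T ⊆ S ∪ T)]

theorem sub_mul_le_of_forall_marginal_mul_le {ι : Type*} [Fintype ι] {A : ι → α → ℝ}
    {b w : ι → ℝ} {S T : Finset α} {δ G : ℝ} (hmono : Monotone f)
    (hsub : ∀ S T : Finset α, f (S ∪ T) + f (S ∩ T) ≤ f S + f T)
    (hA : ∀ i j, 0 ≤ A i j) (hw : ∀ i, 0 ≤ w i) (hT : ∀ i, ∑ j ∈ T, A i j ≤ b i)
    (hδ : 0 ≤ δ) (hG : 0 ≤ G)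
    (hgreedy : ∀ j ∉ S, (f (insert j S) - f S) * G ≤ δ * ∑ i, A i j * w i) :
    (f T - f S) * G ≤ δ * ∑ i, b i * w i :=
  calc (f T - f S) * G ≤ ∑ j ∈ T \ S, (f (insert j S) - f S) * G := by
        rw [← sum_mul]
        exact mul_le_mul_of_nonneg_right (sub_le_sum_marginal_of_submodular hmono hsub S T) hG
    _ ≤ ∑ j ∈ T \ S, δ * ∑ i, A i j * w i :=
        sum_le_sum fun j hj => hgreedy j (mem_sdiff.1 hj).2
    _ = δ * ∑ i, (∑ j ∈ T \ S, A i j) * w i := by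
        rw [← mul_sum, sum_comm]
        simp_rw [sum_mul]
    _ ≤ δ * ∑ i, b i * w i := by
        gcongr with i
        · exact hw i
        · exact (sum_le_sum_of_subset_of_nonneg sdiff_subset fun j _ _ => hA i j).trans (hT i)

end Submodular

theorem mul_rpow_one_div_add_one_sub_one_le {x W B : ℝ} (hx : 1 ≤ x) (hW : 0 ≤ W)
    (hWB : W ≤ B) :
    B * (x ^ (1 / (B + 1)) - 1) ≤ (W + 1) * (x ^ (1 / (W + 1)) - 1) := by
  set c := x ^ (1 / (W + 1))
  have hc : 1 ≤ c := one_le_rpow hx (by positivity)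
  have hp : (W + 1) / (B + 1) ≤ 1 := div_le_one_of_le₀ (by linarith) (by linarith)
  have hx_eq : x ^ (1 / (B + 1)) = (1 + (c - 1)) ^ ((W + 1) / (B + 1)) := by
    rw [add_sub_cancel, ← rpow_mul (by linarith)]
    congr 1
    field_simp
  have bernoulli := rpow_one_add_le_one_add_mul_self (by linarith : -1 ≤ c - 1)
    (div_nonneg (by linarith) (by linarith)) hp
  calc B * (x ^ (1 / (B + 1)) - 1) ≤ B * ((W + 1) / (B + 1) * (c - 1)) := by
        rw [hx_eq]
        exact mul_le_mul_of_nonneg_left (by linarith) (by linarith)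
    _ = B / (B + 1) * ((W + 1) * (c - 1)) := by ring
    _ ≤ (W + 1) * (c - 1) :=
        mul_le_of_le_one_left (by nlinarith) (div_le_one_of_le₀ (by linarith) (by linarith))

theorem subset_of_forall_lt_eq_insert {α : Type*} [DecidableEq α] {S : ℕ → Finset α}
    {γ : ℕ → α} {t k : ℕ} (h : ∀ k < t, S (k + 1) = insert (γ (k + 1)) (S k)) (hk : k ≤ t) :
    S k ⊆ S t :=
  monotoneOn_of_le_succ Set.ordConnected_Iic
    (fun k _ _ hk1 => by simp [h k hk1, subset_insert]) (Set.mem_Iic.2 hk) (Set.mem_Iic.2 le_rfl) hk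

theorem le_mul_exp_of_forall_succ_le {u v : ℕ → ℝ} {a : ℝ} {t : ℕ}
    (h : ∀ k < t, u (k + 1) ≤ u k * exp (a * (v (k + 1) - v k))) :
    u t ≤ u 0 * exp (a * (v t - v 0)) := by
  induction t with
  | zero => simp
  | succ t ih =>
    calc u (t + 1) ≤ u t * exp (a * (v (t + 1) - v t)) := h t (by omega)
      _ ≤ u 0 * exp (a * (v t - v 0)) * exp (a * (v (t + 1) - v t)) := by
          gcongr
          exact ih fun k hk => h k (by omega)
      _ = u 0 * exp (a * (v (t + 1) - v 0)) := by
          rw [mul_assoc, ← exp_add]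
          ring_nf

section Packing

variable {ι α : Type*} (A : ι → α → ℝ) (b : ι → ℝ) (lam : ℝ)

noncomputable def packingWeight (S : Finset α) (i : ι) : ℝ :=
  1 / b i * lam ^ ((∑ j ∈ S, A i j) / (b i + 1))

noncomputable def packingPotential [Fintype ι] (S : Finset α) : ℝ :=
  ∑ i, b i * packingWeight A b lam S i

variable {A b lam}

theorem packingWeight_nonneg (hb : ∀ i, 0 ≤ b i) (hlam : 0 ≤ lam) (S : Finset α) (i : ι) :
    0 ≤ packingWeight A b lam S i :=
  mul_nonneg (one_div_nonneg.2 (hb i)) (rpow_nonneg hlam _)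

variable [Fintype ι]

theorem packingPotential_nonneg (hb : ∀ i, 0 ≤ b i) (hlam : 0 ≤ lam) (S : Finset α) :
    0 ≤ packingPotential A b lam S :=
  sum_nonneg fun i _ => mul_nonneg (hb i) (packingWeight_nonneg hb hlam S i)

theorem packingPotential_empty (hb : ∀ i, b i ≠ 0) :
    packingPotential A b lam ∅ = Fintype.card ι := by
  simp [packingPotential, packingWeight, hb]

variable [DecidableEq α]

theorem packingPotential_insert_le {W : ℝ} {S : Finset α} {γ : α}
    (hA : ∀ i, A i γ = 0 ∨ A i γ = 1) (hlam : 1 ≤ lam) (hW : 0 ≤ W) (hb : ∀ i, W ≤ b i)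
    (hγ : γ ∉ S) :
    packingPotential A b lam (insert γ S) ≤ packingPotential A b lam S +
      (W + 1) * lam ^ (1 / (W + 1)) * ∑ i, A i γ * packingWeight A b lam S i := by
  rw [packingPotential, packingPotential, mul_sum, ← sum_add_distrib]
  refine sum_le_sum fun i _ => ?_
  have hw := packingWeight_nonneg (A := A) (fun i => hW.trans (hb i)) (by linarith : 0 ≤ lam) S i
  rcases hA i with h | h
  · simp [packingWeight, sum_insert hγ, h]
  · have hkey := mul_rpow_one_div_add_one_sub_one_le hlam hW (hb i)
    have hc : 0 ≤ lam ^ (1 / (W + 1)) := rpow_nonneg (by linarith) _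
    have hsplit : b i * packingWeight A b lam (insert γ S) i =
        b i * lam ^ (1 / (b i + 1)) * packingWeight A b lam S i := by
      rw [packingWeight, packingWeight, sum_insert hγ, h, add_div, rpow_add (by linarith)]
      ring
    rw [hsplit, h, one_mul]
    nlinarith [mul_le_mul_of_nonneg_right hkey hw]

theorem packingPotential_insert_le_mul_exp_of_greedy {f : Finset α → ℝ} {W D : ℝ}
    {S T : Finset α} {γ : α} (hmono : Monotone f)
    (hsub : ∀ S T : Finset α, f (S ∪ T) + f (S ∩ T) ≤ f S + f T)
    (hA : ∀ i j, A i j = 0 ∨ A i j = 1) (hlam : 1 ≤ lam) (hW : 0 ≤ W) (hb : ∀ i, W ≤ b i)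
    (hT : ∀ i, ∑ j ∈ T, A i j ≤ b i) (hγ : γ ∉ S) (hD : 0 < D) (hDT : D ≤ f T - f S)
    (hgreedy : ∀ j ∉ S, (f (insert j S) - f S) * ∑ i, A i γ * packingWeight A b lam S i ≤
      (f (insert γ S) - f S) * ∑ i, A i j * packingWeight A b lam S i) :
    packingPotential A b lam (insert γ S) ≤ packingPotential A b lam S *
      exp ((W + 1) * lam ^ (1 / (W + 1)) / D * (f (insert γ S) - f S)) := by
  set K := (W + 1) * lam ^ (1 / (W + 1))
  set δ := f (insert γ S) - f S
  set P := packingPotential A b lam S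
  set G := ∑ i, A i γ * packingWeight A b lam S i
  have hA0 : ∀ i j, 0 ≤ A i j := fun i j => by rcases hA i j with h | h <;> simp [h]
  have hb0 : ∀ i, 0 ≤ b i := fun i => hW.trans (hb i)
  have hw := packingWeight_nonneg (A := A) hb0 (by linarith : 0 ≤ lam) S
  have hK : 0 ≤ K := mul_nonneg (by linarith) (rpow_nonneg (by linarith) _)
  have hP : 0 ≤ P := packingPotential_nonneg hb0 (by linarith) S
  have hG : 0 ≤ G := sum_nonneg fun i _ => mul_nonneg (hA0 i γ) (hw i)
  have hgain : G ≤ δ * P / D := by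
    rw [le_div_iff₀ hD, mul_comm]
    calc D * G ≤ (f T - f S) * G := mul_le_mul_of_nonneg_right hDT hG
      _ ≤ δ * P := sub_mul_le_of_forall_marginal_mul_le hmono hsub hA0 hw hT
          (sub_nonneg.2 (hmono (subset_insert γ S))) hG hgreedy
  calc packingPotential A b lam (insert γ S) ≤ P + K * G :=
        packingPotential_insert_le (hA · γ) hlam hW hb hγ
    _ ≤ P + K * (δ * P / D) := by gcongr
    _ = P * (K / D * δ + 1) := by ring
    _ ≤ P * exp (K / D * δ) := by gcongr; exact add_one_le_exp _

theorem packingPotential_le_mul_exp_of_greedy_chain {f : Finset α → ℝ} {W D : ℝ}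
    {T : Finset α} {S : ℕ → Finset α} {γ : ℕ → α} {t : ℕ} (hmono : Monotone f)
    (hsub : ∀ S T : Finset α, f (S ∪ T) + f (S ∩ T) ≤ f S + f T)
    (hA : ∀ i j, A i j = 0 ∨ A i j = 1) (hlam : 1 ≤ lam) (hW : 0 ≤ W) (hb : ∀ i, W ≤ b i)
    (hT : ∀ i, ∑ j ∈ T, A i j ≤ b i) (hD : 0 < D) (hDT : D ≤ f T - f (S t))
    (hchain : ∀ ℓ, 1 ≤ ℓ → ℓ ≤ t → γ ℓ ∉ S (ℓ - 1) ∧ S ℓ = insert (γ ℓ) (S (ℓ - 1)))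
    (hgreedy : ∀ ℓ, 1 ≤ ℓ → ℓ ≤ t → ∀ j ∉ S (ℓ - 1),
      (f (insert j (S (ℓ - 1))) - f (S (ℓ - 1))) *
          ∑ i, A i (γ ℓ) * packingWeight A b lam (S (ℓ - 1)) i ≤
        (f (S ℓ) - f (S (ℓ - 1))) * ∑ i, A i j * packingWeight A b lam (S (ℓ - 1)) i) :
    packingPotential A b lam (S t) ≤ packingPotential A b lam (S 0) *
      exp ((W + 1) * lam ^ (1 / (W + 1)) / D * (f (S t) - f (S 0))) := by
  have hsucc : ∀ k < t, γ (k + 1) ∉ S k ∧ S (k + 1) = insert (γ (k + 1)) (S k) := fun k hk =>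
    hchain (k + 1) (by omega) hk
  refine le_mul_exp_of_forall_succ_le (u := fun k => packingPotential A b lam (S k))
    (v := fun k => f (S k)) fun k hk => ?_
  obtain ⟨hγ, hSk⟩ := hsucc k hk
  have hgreedy_k := hgreedy (k + 1) (by omega) hk
  simp only [Nat.add_sub_cancel, hSk] at hgreedy_k
  have hSt := subset_of_forall_lt_eq_insert (fun k hk => (hsucc k hk).2) hk.le
  rw [hSk]
  exact packingPotential_insert_le_mul_exp_of_greedy hmono hsub hA hlam hW hb hT hγ hD
    (by linarith [hmono hSt]) hgreedy_k

end Packing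

theorem stmt_6_general (m n t : ℕ) (hm : 1 ≤ m)
    (A : Fin m → Fin n → ℝ) (hA : ∀ i j, A i j = 0 ∨ A i j = 1)
    (b : Fin m → ℕ) (hb : ∀ i, 1 ≤ b i)
    (W : ℝ) (hW : 1 ≤ W) (hwidth : ∀ i, W ≤ (b i : ℝ))
    (f : Finset (Fin n) → ℝ)
    (hf_norm : f ∅ = 0)
    (hf_mono : ∀ S T : Finset (Fin n), S ⊆ T → f S ≤ f T)
    (hf_submod : ∀ S T : Finset (Fin n), f (S ∪ T) + f (S ∩ T) ≤ f S + f T)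
    (lam : ℝ) (hlam : lam = Real.exp (W + 1) * m)
    (S : ℕ → Finset (Fin n)) (γ : ℕ → Fin n)
    (hS0 : S 0 = ∅)
    (hchain : ∀ ℓ, 1 ≤ ℓ → ℓ ≤ t →
      γ ℓ ∉ S (ℓ - 1) ∧ S ℓ = insert (γ ℓ) (S (ℓ - 1)))
    (w : Fin m → ℕ → ℝ)
    (hw : ∀ i ℓ, w i ℓ = (1 / (b i : ℝ)) * lam ^ ((∑ j ∈ S ℓ, A i j) / ((b i : ℝ) + 1)))
    (hgreedy : ∀ ℓ, 1 ≤ ℓ → ℓ ≤ t → ∀ j : Fin n, j ∉ S (ℓ - 1) →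
      (f (insert j (S (ℓ - 1))) - f (S (ℓ - 1))) * ∑ i, A i (γ ℓ) * w i (ℓ - 1)
        ≤ (f (S ℓ) - f (S (ℓ - 1))) * ∑ i, A i j * w i (ℓ - 1))
    (Sstar : Finset (Fin n))
    (hfeas : ∀ i, ∑ j ∈ Sstar, A i j ≤ (b i : ℝ))
    (hopt : f (S t) < f Sstar)
    (hterm : Real.exp (W + 1) * m ≤ ∑ i, (b i : ℝ) * w i t) :
    f (S t) ≥ f Sstar / (Real.exp 1 * (m : ℝ) ^ (1 / (W + 1)) + 1) := by
  have hm0 : (0 : ℝ) < m := by exact_mod_cast hm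
  have hlam1 : 1 ≤ lam := by
    rw [hlam]
    nlinarith [one_le_exp (by linarith : 0 ≤ W + 1), (by exact_mod_cast hm : (1 : ℝ) ≤ m)]
  set c := exp 1 * (m : ℝ) ^ (1 / (W + 1))
  have hc : lam ^ (1 / (W + 1)) = c := by
    rw [hlam, mul_rpow (exp_pos _).le hm0.le, ← exp_mul, mul_one_div_cancel (by linarith)]
  have hw_weight : ∀ i ℓ, w i ℓ = packingWeight A (fun i => (b i : ℝ)) lam (S ℓ) i := hw
  simp only [hw_weight] at hgreedy hterm
  set D := f Sstar - f (S t)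
  have hD : 0 < D := sub_pos.2 hopt
  have hΦ := packingPotential_le_mul_exp_of_greedy_chain (fun S T h => hf_mono S T h) hf_submod
    hA hlam1 (by linarith) hwidth hfeas hD le_rfl hchain hgreedy
  rw [hS0, packingPotential_empty fun i => Nat.cast_ne_zero.2 (Nat.one_le_iff_ne_zero.1 (hb i)),
    Fintype.card_fin, hf_norm, sub_zero, hc] at hΦ
  have hlog : W + 1 ≤ (W + 1) * c / D * f (S t) := by
    rw [← exp_le_exp]
    nlinarith [hΦ.trans' hterm]
  have hDc : D ≤ c * f (S t) := by
    rw [div_mul_eq_mul_div, le_div_iff₀ hD] at hlog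
    nlinarith
  rw [ge_iff_le, div_le_iff₀ (by positivity)]
  linarith

/-- Approximation lemma for the modified multiplicative-updates
algorithm in the binary setting, with update factor `λ = e^{W+1}·m` and weights
`w_{iℓ} = (1/b_i)·λ^{(Σ_{j∈S_ℓ} A_{ij})/(b_i+1)}`: if the loop terminates with
`Σ_i b_i w_{it} ≥ e^{W+1}·m` and `S*` is feasible with `f(S*) > f(S_t)`, then
`f(S_t) ≥ f(S*) / (e·m^{1/(W+1)} + 1)`. -/
theorem stmt_6 (m n t : ℕ) (hm : 1 ≤ m)
    (A : Fin m → Fin n → ℝ) (hA : ∀ i j, A i j = 0 ∨ A i j = 1)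
    (b : Fin m → ℕ) (hb : ∀ i, 1 ≤ b i)
    (W : ℝ) (hW : 1 ≤ W) (hwidth : ∀ i, W ≤ (b i : ℝ))
    (f : Finset (Fin n) → ℝ)
    (hf_nonneg : ∀ S, 0 ≤ f S)
    (hf_norm : f ∅ = 0)
    (hf_mono : ∀ S T : Finset (Fin n), S ⊆ T → f S ≤ f T)
    (hf_submod : ∀ S T : Finset (Fin n), f (S ∪ T) + f (S ∩ T) ≤ f S + f T)
    (lam : ℝ) (hlam : lam = Real.exp (W + 1) * m)
    (S : ℕ → Finset (Fin n)) (γ : ℕ → Fin n)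
    (hS0 : S 0 = ∅)
    (hchain : ∀ ℓ, 1 ≤ ℓ → ℓ ≤ t →
      γ ℓ ∉ S (ℓ - 1) ∧ S ℓ = insert (γ ℓ) (S (ℓ - 1)))
    (w : Fin m → ℕ → ℝ)
    (hw : ∀ i ℓ, w i ℓ = (1 / (b i : ℝ)) * lam ^ ((∑ j ∈ S ℓ, A i j) / ((b i : ℝ) + 1)))
    (hδ : ∀ ℓ, 1 ≤ ℓ → ℓ ≤ t → 0 < f (S ℓ) - f (S (ℓ - 1)))
    (hgreedy : ∀ ℓ, 1 ≤ ℓ → ℓ ≤ t → ∀ j : Fin n, j ∉ S (ℓ - 1) →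
      (f (insert j (S (ℓ - 1))) - f (S (ℓ - 1))) * ∑ i, A i (γ ℓ) * w i (ℓ - 1)
        ≤ (f (S ℓ) - f (S (ℓ - 1))) * ∑ i, A i j * w i (ℓ - 1))
    (Sstar : Finset (Fin n))
    (hfeas : ∀ i, ∑ j ∈ Sstar, A i j ≤ (b i : ℝ))
    (hopt : f (S t) < f Sstar)
    (hterm : Real.exp (W + 1) * m ≤ ∑ i, (b i : ℝ) * w i t) :
    f (S t) ≥ f Sstar / (Real.exp 1 * (m : ℝ) ^ (1 / (W + 1)) + 1) :=
  stmt_6_general m n t hm A hA b hb W hW hwidth f hf_norm hf_mono hf_submod lam hlam S γ hS0 hchain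
    w hw hgreedy Sstar hfeas hopt hterm
end

section
/- Let A ∈ {0,1}^{m×n} be a binary matrix with at most k nonzero entries per column (k ≥ 1), b ∈ ℕ₊^m a vector of positive integers, W ≥ 1 with W ≤ b_i for all i ∈ [m], and set λ = k + 1. Let f : 2^[n] → ℝ₊ be a normalized monotone submodular set function. Let e_1, …, e_n be an enumeration of [n], write E_t = {e_1, …, e_t} (with E_0 = ∅), and let S ⊆ [n] satisfy: (i) greedy order with respect to S: for every t ∈ [n] and every j ∈ [n]∖E_{t−1}, f_{S∩E_{t−1}}(e_t) ≥ f_{S∩E_{t−1}}(j); and (ii) the selection rule: for every t ∈ [n], e_t ∈ S if and only if Σ_{i=1}^m A_{i e_t}·(λ^{(Σ_{j∈S∩E_{t−1}} A_{ij})/b_i} − 1) < λ − 1. Then S is feasible (Σ_{j∈S} A_{ij} ≤ b_i for all i), and for every feasible S* ⊆ [n], f(S) ≥ f(S*) / (2 + 2·W·(k+1)^{1/W}). -/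
/-!
Feasibility: an item is accepted only if every row `i` it touches has weight
`λ ^ (Lᵢ / bᵢ) < λ`, i.e. load `Lᵢ < bᵢ`; loads are integers, so they never exceed capacities.

Approximation: by submodularity `f S* ≤ f S + ∑ g t` over the rejected items `e t ∈ S*`, where
`g t` is the marginal value of `e t` when it was considered. A rejected item saw
`∑ᵢ A i (e t) * (wᵢ(t) - 1) ≥ λ - 1`. Write `wᵢ(t) - 1` as the sum of the increments made by the
earlier accepted items `u`; since `g t ≤ g u` (greedy order) and `S*` is feasible, each increment
of row `i` is charged at most `bᵢ` times. Convexity of `x ↦ λ ^ x` bounds `bᵢ` times the increment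
by `W (λ ^ (1/W) - 1) A i (e u) wᵢ(u)`, and the acceptance rule bounds `∑ᵢ A i (e u) wᵢ(u)` by
`λ - 1 + k = 2k`; summing `g u` over the accepted `u` gives `f S`.
-/

open Finset

section Submodular

variable {α : Type*} [DecidableEq α] {f : Finset α → ℝ}

def marginal (f : Finset α → ℝ) (T : Finset α) (j : α) : ℝ := f (insert j T) - f T

theorem marginal_nonneg (hf_mono : ∀ S T : Finset α, S ⊆ T → f S ≤ f T) (T : Finset α) (j : α) :
    0 ≤ marginal f T j :=
  sub_nonneg.2 (hf_mono _ _ (subset_insert j T))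

theorem marginal_le_marginal_of_subset
    (hf_submod : ∀ S T : Finset α, f (S ∪ T) + f (S ∩ T) ≤ f S + f T)
    {X Y : Finset α} (hXY : X ⊆ Y) {j : α} (hj : j ∉ Y) :
    marginal f Y j ≤ marginal f X j := by
  have h := hf_submod (insert j X) Y
  rw [insert_union, union_eq_right.2 hXY, insert_inter_of_notMem hj, inter_eq_left.2 hXY] at h
  unfold marginal
  linarith

theorem le_add_sum_marginal
    (hf_submod : ∀ S T : Finset α, f (S ∪ T) + f (S ∩ T) ≤ f S + f T) (S T : Finset α) :
    f (S ∪ T) ≤ f S + ∑ j ∈ T, marginal f S j := by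
  induction T using Finset.induction_on with
  | empty => simp
  | insert a T ha ih =>
    rw [sum_insert ha, union_insert]
    by_cases haS : a ∈ S
    · rwa [insert_eq_of_mem (mem_union_left T haS), marginal, insert_eq_of_mem haS, sub_self,
        zero_add]
    · have := marginal_le_marginal_of_subset hf_submod (subset_union_left : S ⊆ S ∪ T)
        (show a ∉ S ∪ T by simp [haS, ha])
      rw [marginal] at this
      linarith

end Submodular

theorem mul_rpow_one_div_sub_one_le {a x y : ℝ} (ha : 1 ≤ a) (hx : 0 < x) (hxy : x ≤ y) :
    y * (a ^ (1 / y) - 1) ≤ x * (a ^ (1 / x) - 1) := by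
  have hy : 0 < y := hx.trans_le hxy
  have hpow : a ^ (1 / y) = (1 + (a ^ (1 / x) - 1)) ^ (x / y) := by
    rw [add_sub_cancel, ← Real.rpow_mul (by linarith)]
    congr 1
    field_simp
  have hbern := rpow_one_add_le_one_add_mul_self (s := a ^ (1 / x) - 1)
    (by linarith [Real.one_le_rpow ha (one_div_pos.2 hx).le]) (div_nonneg hx.le hy.le)
    ((div_le_one hy).2 hxy)
  rw [← hpow] at hbern
  calc y * (a ^ (1 / y) - 1) ≤ y * (x / y * (a ^ (1 / x) - 1)) :=
        mul_le_mul_of_nonneg_left (by linarith) hy.le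
    _ = x * (a ^ (1 / x) - 1) := by field_simp

theorem sum_eq_card_filter_of_zero_or_one {α : Type*} {v : α → ℝ} {T : Finset α}
    (hv : ∀ j ∈ T, v j = 0 ∨ v j = 1) : ∑ j ∈ T, v j = #{j ∈ T | v j = 1} := by
  rw [natCast_card_filter]
  refine sum_congr rfl fun j hj => ?_
  rcases hv j hj with h | h <;> simp [h]

theorem sum_mul_sum_range_le_of_antitoneOn {n : ℕ} {T : Finset ℕ} (hT : T ⊆ range n)
    {g a D : ℕ → ℝ} {B : ℝ} (hg : AntitoneOn g (Set.Iio n)) (hg0 : ∀ u < n, 0 ≤ g u)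
    (ha : ∀ t ∈ T, 0 ≤ a t) (hD : ∀ u, 0 ≤ D u) (haB : ∑ t ∈ T, a t ≤ B) :
    ∑ t ∈ T, g t * a t * ∑ u ∈ range t, D u ≤ B * ∑ u ∈ range n, g u * D u := by
  have hswap : ∀ t u, t ∈ T ∧ u ∈ range t ↔ t ∈ {t ∈ T | u < t} ∧ u ∈ range n := by
    intro t u
    simp only [mem_filter, mem_range]
    constructor
    · rintro ⟨ht, hut⟩
      exact ⟨⟨ht, hut⟩, hut.trans (mem_range.1 (hT ht))⟩
    · rintro ⟨⟨ht, hut⟩, -⟩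
      exact ⟨ht, hut⟩
  calc ∑ t ∈ T, g t * a t * ∑ u ∈ range t, D u
      = ∑ t ∈ T, ∑ u ∈ range t, g t * D u * a t := by
        simp_rw [mul_sum]
        exact sum_congr rfl fun _ _ => sum_congr rfl fun _ _ => by ring
    _ ≤ ∑ t ∈ T, ∑ u ∈ range t, g u * D u * a t := by
        refine sum_le_sum fun t ht => sum_le_sum fun u hu => ?_
        have htn := mem_range.1 (hT ht)
        have hut := mem_range.1 hu
        rw [mul_assoc, mul_assoc]
        exact mul_le_mul_of_nonneg_right (hg (hut.trans htn) htn hut.le)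
          (mul_nonneg (hD u) (ha t ht))
    _ = ∑ u ∈ range n, g u * D u * ∑ t ∈ T with u < t, a t := by
        rw [sum_comm' hswap]; simp_rw [mul_sum]
    _ ≤ ∑ u ∈ range n, g u * D u * B := by
        refine sum_le_sum fun u hu => mul_le_mul_of_nonneg_left ?_
          (mul_nonneg (hg0 u (mem_range.1 hu)) (hD u))
        exact (sum_le_sum_of_subset_of_nonneg (filter_subset _ T)
          fun t ht _ => ha t ht).trans haB
    _ = B * ∑ u ∈ range n, g u * D u := by
        rw [mul_sum]
        exact sum_congr rfl fun _ _ => by ring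

section Weights

variable {ι α : Type*} {A : ι → α → ℝ} {b : ι → ℕ} {lam : ℝ}
  {T T' : Finset α} {i : ι} {j : α}

noncomputable def rowWeight (lam : ℝ) (A : ι → α → ℝ) (b : ι → ℕ) (T : Finset α) (i : ι) : ℝ :=
  lam ^ ((∑ j ∈ T, A i j) / b i)

theorem rowWeight_empty : rowWeight lam A b ∅ i = 1 := by
  simp [rowWeight]

theorem one_le_rowWeight (hlam : 1 ≤ lam) (hA : ∀ j, 0 ≤ A i j) : 1 ≤ rowWeight lam A b T i :=
  Real.one_le_rpow hlam (div_nonneg (sum_nonneg fun j _ => hA j) (Nat.cast_nonneg _))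

theorem rowWeight_mono (hlam : 1 ≤ lam) (hA : ∀ j, 0 ≤ A i j) (hTT' : T ⊆ T') :
    rowWeight lam A b T i ≤ rowWeight lam A b T' i :=
  Real.rpow_le_rpow_of_exponent_le hlam <| div_le_div_of_nonneg_right
    (sum_le_sum_of_subset_of_nonneg hTT' fun j _ _ => hA j) (Nat.cast_nonneg _)

theorem rowWeight_insert [DecidableEq α] (hlam : 0 < lam) (hj : j ∉ T) :
    rowWeight lam A b (insert j T) i = rowWeight lam A b T i * lam ^ (A i j / b i) := by
  rw [rowWeight, rowWeight, sum_insert hj, add_div, Real.rpow_add hlam, mul_comm]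

theorem mul_rowWeight_insert_sub_le [DecidableEq α] {W : ℝ} (hlam : 1 ≤ lam)
    (hAij : A i j = 0 ∨ A i j = 1) (hj : j ∉ T) (hW : 0 < W) (hWb : W ≤ b i) :
    b i * (rowWeight lam A b (insert j T) i - rowWeight lam A b T i)
      ≤ W * (lam ^ (1 / W) - 1) * (A i j * rowWeight lam A b T i) := by
  have hw : 0 ≤ rowWeight lam A b T i := Real.rpow_nonneg (by linarith) _
  rw [rowWeight_insert (by linarith) hj]
  rcases hAij with h | h
  · simp [h]
  · rw [h]
    calc (b i : ℝ) * (rowWeight lam A b T i * lam ^ (1 / (b i : ℝ)) - rowWeight lam A b T i)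
        = rowWeight lam A b T i * (b i * (lam ^ (1 / (b i : ℝ)) - 1)) := by ring
      _ ≤ rowWeight lam A b T i * (W * (lam ^ (1 / W) - 1)) :=
          mul_le_mul_of_nonneg_left (mul_rpow_one_div_sub_one_le hlam hW hWb) hw
      _ = W * (lam ^ (1 / W) - 1) * (1 * rowWeight lam A b T i) := by ring

theorem sum_mul_rowWeight_insert_sub_le [Fintype ι] [DecidableEq α] {W k : ℝ} (hlam : 1 ≤ lam)
    (hA : ∀ i, A i j = 0 ∨ A i j = 1) (hsparse : ∑ i, A i j ≤ k) (hj : j ∉ T)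
    (hW : 0 < W) (hwidth : ∀ i, W ≤ b i)
    (haccept : ∑ i, A i j * (rowWeight lam A b T i - 1) < lam - 1) :
    ∑ i, b i * (rowWeight lam A b (insert j T) i - rowWeight lam A b T i)
      ≤ W * (lam ^ (1 / W) - 1) * (lam - 1 + k) := by
  have hC : 0 ≤ W * (lam ^ (1 / W) - 1) :=
    mul_nonneg hW.le (sub_nonneg.2 (Real.one_le_rpow hlam (one_div_pos.2 hW).le))
  have hsplit : ∑ i, A i j * rowWeight lam A b T i
      = ∑ i, A i j * (rowWeight lam A b T i - 1) + ∑ i, A i j := by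
    rw [← sum_add_distrib]
    exact sum_congr rfl fun _ _ => by ring
  calc ∑ i, b i * (rowWeight lam A b (insert j T) i - rowWeight lam A b T i)
      ≤ ∑ i, W * (lam ^ (1 / W) - 1) * (A i j * rowWeight lam A b T i) :=
        sum_le_sum fun i _ => mul_rowWeight_insert_sub_le hlam (hA i) hj hW (hwidth i)
    _ = W * (lam ^ (1 / W) - 1) * ∑ i, A i j * rowWeight lam A b T i := by rw [mul_sum]
    _ ≤ W * (lam ^ (1 / W) - 1) * (lam - 1 + k) :=
        mul_le_mul_of_nonneg_left (by linarith) hC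

theorem sum_insert_le_of_accept [Fintype ι] [DecidableEq α] (hlam : 1 ≤ lam)
    (hA : ∀ i j, A i j = 0 ∨ A i j = 1) (hb : ∀ i, 0 < (b i : ℝ)) (hj : j ∉ T)
    (hT : ∀ i, ∑ j' ∈ T, A i j' ≤ b i)
    (haccept : ∑ i, A i j * (rowWeight lam A b T i - 1) < lam - 1) (i : ι) :
    ∑ j' ∈ insert j T, A i j' ≤ b i := by
  have hA0 : ∀ i j, 0 ≤ A i j := fun i j => by rcases hA i j with h | h <;> simp [h]
  rw [sum_insert hj]
  rcases hA i j with h | h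
  · simpa [h] using hT i
  have hlt : ∑ j' ∈ T, A i j' < b i := by
    by_contra! hge
    have hheavy : lam ^ (1 : ℝ) ≤ rowWeight lam A b T i :=
      Real.rpow_le_rpow_of_exponent_le hlam ((one_le_div (hb i)).2 hge)
    have hrow := single_le_sum (f := fun i' => A i' j * (rowWeight lam A b T i' - 1))
      (fun i' _ => mul_nonneg (hA0 i' j) (sub_nonneg.2 (one_le_rowWeight hlam (hA0 i'))))
      (mem_univ i)
    simp only [h, one_mul, Real.rpow_one] at hheavy hrow
    linarith
  rw [sum_eq_card_filter_of_zero_or_one fun j' _ => hA i j'] at hlt ⊢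
  have hcard : #{j' ∈ T | A i j' = 1} < b i := by exact_mod_cast hlt
  rw [h]
  exact_mod_cast Nat.one_add_le_iff.2 hcard

end Weights

section GreedyOrder

variable {α : Type*} [DecidableEq α] {n t : ℕ} {e : ℕ → α} {S : Finset α}

theorem apply_notMem_image_range (hinj : Set.InjOn e (Set.Iio n)) (ht : t < n) :
    e t ∉ (range t).image e := by
  simp only [mem_image, mem_range, not_exists, not_and]
  intro s hst hs
  exact hst.ne (hinj (hst.trans ht) ht hs)

theorem image_range_eq_univ {e : ℕ → Fin n} (hinj : Set.InjOn e (Set.Iio n)) :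
    (range n).image e = univ :=
  eq_univ_of_card _ <| by
    rw [card_image_of_injOn (by rwa [coe_range]), card_range, Fintype.card_fin]

theorem inter_image_range_succ_of_mem (h : e t ∈ S) :
    S ∩ (range (t + 1)).image e = insert (e t) (S ∩ (range t).image e) := by
  rw [range_add_one, image_insert, inter_insert_of_mem h]

theorem inter_image_range_succ_of_notMem (h : e t ∉ S) :
    S ∩ (range (t + 1)).image e = S ∩ (range t).image e := by
  rw [range_add_one, image_insert, inter_insert_of_notMem h]

theorem sum_filter_range_apply {M : Type*} [AddCommMonoid M] (hinj : Set.InjOn e (Set.Iio n))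
    {X : Finset α} (hX : X ⊆ (range n).image e) (φ : α → M) :
    ∑ t ∈ range n with e t ∈ X, φ (e t) = ∑ j ∈ X, φ j := by
  rw [← sum_image (hinj.mono fun t ht => mem_range.1 (mem_filter.1 (mem_coe.1 ht)).1),
    ← filter_image (p := (· ∈ X)), filter_mem_eq_inter, inter_eq_right.2 hX]

theorem sum_inter_image_range_le {ι : Type*} [Fintype ι] {A : ι → α → ℝ} {b : ι → ℕ} {lam : ℝ}
    (hlam : 1 ≤ lam) (hA : ∀ i j, A i j = 0 ∨ A i j = 1) (hb : ∀ i, 0 < (b i : ℝ))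
    (hinj : Set.InjOn e (Set.Iio n))
    (haccept : ∀ t < n, e t ∈ S →
      ∑ i, A i (e t) * (rowWeight lam A b (S ∩ (range t).image e) i - 1) < lam - 1) :
    ∀ t ≤ n, ∀ i, ∑ j ∈ S ∩ (range t).image e, A i j ≤ b i := by
  intro t
  induction t with
  | zero => simp [fun i => (hb i).le]
  | succ t ih =>
    intro htn
    by_cases h : e t ∈ S
    · rw [inter_image_range_succ_of_mem h]
      exact sum_insert_le_of_accept hlam hA hb
        (fun hmem => apply_notMem_image_range hinj htn (mem_inter.1 hmem).2)
        (ih (Nat.le_of_succ_le htn)) (haccept t htn h)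
    · rw [inter_image_range_succ_of_notMem h]
      exact ih (Nat.le_of_succ_le htn)

variable {f : Finset α → ℝ}

theorem antitoneOn_marginal_of_greedy
    (hf_submod : ∀ S T : Finset α, f (S ∪ T) + f (S ∩ T) ≤ f S + f T)
    (hinj : Set.InjOn e (Set.Iio n))
    (hgreedy : ∀ t < n, ∀ j, j ∉ (range t).image e →
      marginal f (S ∩ (range t).image e) j ≤ marginal f (S ∩ (range t).image e) (e t)) :
    AntitoneOn (fun t => marginal f (S ∩ (range t).image e) (e t)) (Set.Iio n) := by
  intro u hu t ht hut
  have hsub : (range u).image e ⊆ (range t).image e :=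
    image_subset_image (range_subset_range.2 hut)
  have hnotin := apply_notMem_image_range hinj ht
  calc marginal f (S ∩ (range t).image e) (e t)
      ≤ marginal f (S ∩ (range u).image e) (e t) :=
        marginal_le_marginal_of_subset hf_submod (inter_subset_inter_left hsub)
          fun hmem => hnotin (mem_inter.1 hmem).2
    _ ≤ marginal f (S ∩ (range u).image e) (e u) :=
        hgreedy u hu (e t) fun hmem => hnotin (hsub hmem)

theorem le_add_sum_marginal_prefix [Fintype α]
    (hf_mono : ∀ S T : Finset α, S ⊆ T → f S ≤ f T)
    (hf_submod : ∀ S T : Finset α, f (S ∪ T) + f (S ∩ T) ≤ f S + f T)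
    (hinj : Set.InjOn e (Set.Iio n)) (hsurj : (range n).image e = univ) (Sstar : Finset α) :
    f Sstar ≤
      f S + ∑ t ∈ range n with e t ∈ Sstar \ S, marginal f (S ∩ (range t).image e) (e t) := by
  calc f Sstar ≤ f (S ∪ Sstar \ S) :=
        hf_mono _ _ (subset_union_right.trans union_sdiff_self_eq_union.ge)
    _ ≤ f S + ∑ j ∈ Sstar \ S, marginal f S j := le_add_sum_marginal hf_submod S _
    _ = f S + ∑ t ∈ range n with e t ∈ Sstar \ S, marginal f S (e t) := by
        rw [sum_filter_range_apply hinj (hsurj ▸ subset_univ _)]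
    _ ≤ _ := by
        gcongr with t ht
        exact marginal_le_marginal_of_subset hf_submod inter_subset_left
          (mem_sdiff.1 (mem_filter.1 ht).2).2

end GreedyOrder

section Charging

variable {ι α : Type*} [Fintype ι] [DecidableEq α] {n : ℕ} {e : ℕ → α} {S : Finset α}
  {A : ι → α → ℝ} {b : ι → ℕ} {lam W k : ℝ} {f : Finset α → ℝ}

theorem marginal_mul_sum_rowWeight_succ_sub_le (hlam : 1 ≤ lam)
    (hA : ∀ i j, A i j = 0 ∨ A i j = 1) (hsparse : ∀ j, ∑ i, A i j ≤ k)
    (hW : 0 < W) (hwidth : ∀ i, W ≤ b i) (hf_mono : ∀ S T : Finset α, S ⊆ T → f S ≤ f T)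
    (hinj : Set.InjOn e (Set.Iio n))
    (haccept : ∀ t < n, e t ∈ S →
      ∑ i, A i (e t) * (rowWeight lam A b (S ∩ (range t).image e) i - 1) < lam - 1)
    {u : ℕ} (hu : u < n) :
    marginal f (S ∩ (range u).image e) (e u) * ∑ i, b i *
        (rowWeight lam A b (S ∩ (range (u + 1)).image e) i
          - rowWeight lam A b (S ∩ (range u).image e) i)
      ≤ W * (lam ^ (1 / W) - 1) * (lam - 1 + k) *
        (f (S ∩ (range (u + 1)).image e) - f (S ∩ (range u).image e)) := by
  by_cases h : e u ∈ S
  · rw [inter_image_range_succ_of_mem h, mul_comm _ (f _ - _)]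
    exact mul_le_mul_of_nonneg_left
      (sum_mul_rowWeight_insert_sub_le hlam (hA · (e u)) (hsparse _)
        (fun hmem => apply_notMem_image_range hinj hu (mem_inter.1 hmem).2) hW hwidth
        (haccept u hu h))
      (marginal_nonneg hf_mono _ _)
  · simp [inter_image_range_succ_of_notMem h]

theorem sub_one_mul_sum_marginal_le [Fintype α] (hlam : 1 ≤ lam)
    (hA : ∀ i j, A i j = 0 ∨ A i j = 1) (hsparse : ∀ j, ∑ i, A i j ≤ k)
    (hW : 0 < W) (hwidth : ∀ i, W ≤ b i) (hf_norm : f ∅ = 0)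
    (hf_mono : ∀ S T : Finset α, S ⊆ T → f S ≤ f T)
    (hf_submod : ∀ S T : Finset α, f (S ∪ T) + f (S ∩ T) ≤ f S + f T)
    (hinj : Set.InjOn e (Set.Iio n)) (hsurj : (range n).image e = univ)
    (hgreedy : ∀ t < n, ∀ j, j ∉ (range t).image e →
      marginal f (S ∩ (range t).image e) j ≤ marginal f (S ∩ (range t).image e) (e t))
    (hselect : ∀ t < n, (e t ∈ S ↔
      ∑ i, A i (e t) * (rowWeight lam A b (S ∩ (range t).image e) i - 1) < lam - 1))
    {Sstar : Finset α} (hSstar : ∀ i, ∑ j ∈ Sstar, A i j ≤ b i) :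
    (lam - 1) * ∑ t ∈ range n with e t ∈ Sstar \ S, marginal f (S ∩ (range t).image e) (e t)
      ≤ W * (lam ^ (1 / W) - 1) * (lam - 1 + k) * f S := by
  set R := {t ∈ range n | e t ∈ Sstar \ S}
  set g : ℕ → ℝ := fun t => marginal f (S ∩ (range t).image e) (e t)
  set w : ι → ℕ → ℝ := fun i t => rowWeight lam A b (S ∩ (range t).image e) i
  have hA0 : ∀ i j, 0 ≤ A i j := fun i j => by rcases hA i j with h | h <;> simp [h]
  have hD0 : ∀ i u, 0 ≤ w i (u + 1) - w i u := fun i u => sub_nonneg.2 <|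
    rowWeight_mono hlam (hA0 i) <|
      inter_subset_inter_left (image_subset_image (range_subset_range.2 u.le_succ))
  have hreject : ∀ t ∈ R, lam - 1 ≤ ∑ i, A i (e t) * ∑ u ∈ range t, (w i (u + 1) - w i u) := by
    intro t ht
    obtain ⟨htn, hmem⟩ := mem_filter.1 ht
    simp only [sum_range_sub (w _), w, range_zero, image_empty, inter_empty, rowWeight_empty]
    exact not_lt.1 fun h => (mem_sdiff.1 hmem).2 ((hselect t (mem_range.1 htn)).2 h)
  have hrow : ∀ i, ∑ t ∈ R, A i (e t) ≤ b i := fun i => by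
    rw [sum_filter_range_apply hinj (hsurj ▸ subset_univ _)]
    exact (sum_le_sum_of_subset_of_nonneg sdiff_subset fun j _ _ => hA0 i j).trans (hSstar i)
  calc (lam - 1) * ∑ t ∈ R, g t
      ≤ ∑ t ∈ R, g t * ∑ i, A i (e t) * ∑ u ∈ range t, (w i (u + 1) - w i u) := by
        rw [mul_sum]
        exact sum_le_sum fun t ht => by
          rw [mul_comm]
          exact mul_le_mul_of_nonneg_left (hreject t ht) (marginal_nonneg hf_mono _ _)
    _ = ∑ i, ∑ t ∈ R, g t * A i (e t) * ∑ u ∈ range t, (w i (u + 1) - w i u) := by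
        simp_rw [mul_sum, mul_assoc]; exact sum_comm
    _ ≤ ∑ i, b i * ∑ u ∈ range n, g u * (w i (u + 1) - w i u) :=
        sum_le_sum fun i _ => sum_mul_sum_range_le_of_antitoneOn (filter_subset _ _)
          (antitoneOn_marginal_of_greedy hf_submod hinj hgreedy)
          (fun _ _ => marginal_nonneg hf_mono _ _) (fun t _ => hA0 i (e t)) (hD0 i) (hrow i)
    _ = ∑ u ∈ range n, g u * ∑ i, b i * (w i (u + 1) - w i u) := by
        simp_rw [mul_sum]; rw [sum_comm]
        exact sum_congr rfl fun _ _ => sum_congr rfl fun _ _ => by ring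
    _ ≤ ∑ u ∈ range n, W * (lam ^ (1 / W) - 1) * (lam - 1 + k) *
          (f (S ∩ (range (u + 1)).image e) - f (S ∩ (range u).image e)) :=
        sum_le_sum fun u hu => marginal_mul_sum_rowWeight_succ_sub_le hlam hA hsparse hW hwidth
          hf_mono hinj (fun t ht => (hselect t ht).1) (mem_range.1 hu)
    _ = W * (lam ^ (1 / W) - 1) * (lam - 1 + k) * f S := by
        rw [← mul_sum, sum_range_sub (fun t => f (S ∩ (range t).image e)), hsurj]
        simp [hf_norm]

end Charging

theorem stmt_11_general (m n k : ℕ) (hk : 1 ≤ k)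
    (A : Fin m → Fin n → ℝ) (hA : ∀ i j, A i j = 0 ∨ A i j = 1)
    (hsparse : ∀ j, ∑ i, A i j ≤ (k : ℝ))
    (b : Fin m → ℕ)
    (W : ℝ) (hW : 1 ≤ W) (hwidth : ∀ i, W ≤ (b i : ℝ))
    (lam : ℝ) (hlam : lam = (k : ℝ) + 1)
    (f : Finset (Fin n) → ℝ)
    (hf_norm : f ∅ = 0)
    (hf_mono : ∀ S T : Finset (Fin n), S ⊆ T → f S ≤ f T)
    (hf_submod : ∀ S T : Finset (Fin n), f (S ∪ T) + f (S ∩ T) ≤ f S + f T)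
    (e : ℕ → Fin n) (hinj : ∀ s < n, ∀ t < n, e s = e t → s = t)
    (E : ℕ → Finset (Fin n)) (hE : ∀ t, E t = (Finset.range t).image e)
    (S : Finset (Fin n))
    (hgreedy : ∀ t < n, ∀ j : Fin n, j ∉ E t →
      f (insert j (S ∩ E t)) - f (S ∩ E t)
        ≤ f (insert (e t) (S ∩ E t)) - f (S ∩ E t))
    (hselect : ∀ t < n, (e t ∈ S ↔
      ∑ i, A i (e t) * (lam ^ ((∑ j ∈ S ∩ E t, A i j) / (b i : ℝ)) - 1) < lam - 1)) :
    (∀ i, ∑ j ∈ S, A i j ≤ (b i : ℝ)) ∧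
      ∀ Sstar : Finset (Fin n), (∀ i, ∑ j ∈ Sstar, A i j ≤ (b i : ℝ)) →
        f S ≥ f Sstar / (2 + 2 * W * ((k : ℝ) + 1) ^ (1 / W)) := by
  obtain rfl : E = fun t => (range t).image e := funext hE
  subst hlam
  have hW0 : 0 < W := by linarith
  have hk0 : (0 : ℝ) < k := by exact_mod_cast hk
  have hinj' : Set.InjOn e (Set.Iio n) := fun s hs t ht => hinj s hs t ht
  have hsurj := image_range_eq_univ hinj'
  refine ⟨fun i => ?_, fun Sstar hSstar => ?_⟩
  · simpa [hsurj] using sum_inter_image_range_le (by linarith) hA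
      (fun i => hW0.trans_le (hwidth i)) hinj' (fun t ht => (hselect t ht).1) n le_rfl i
  have happrox := le_add_sum_marginal_prefix (S := S) hf_mono hf_submod hinj' hsurj Sstar
  have hcharge := sub_one_mul_sum_marginal_le (by linarith) hA hsparse hW0 hwidth hf_norm
    hf_mono hf_submod hinj' hsurj hgreedy hselect hSstar
  have hfS : 0 ≤ f S := hf_norm ▸ hf_mono ∅ S (empty_subset S)
  rw [add_sub_cancel_right] at hcharge
  rw [ge_iff_le, div_le_iff₀ (by positivity)]
  nlinarith [mul_nonneg hW0.le hfS]

/-- Column-sparse multiplicative-updates theorem: for a binary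
`k`-column-sparse matrix `A`, positive integer capacities `b` with width
`W ≤ b_i`, update factor `λ = k + 1`, a normalized monotone submodular `f`, a
greedy enumeration `e` of `[n]` (with prefixes `E_t`), and a solution set `S`
obeying the selection rule, `S` is feasible and
`f(S) ≥ f(S*) / (2 + 2·W·(k+1)^{1/W})` for every feasible `S*`. -/
theorem stmt_11 (m n k : ℕ) (hk : 1 ≤ k)
    (A : Fin m → Fin n → ℝ) (hA : ∀ i j, A i j = 0 ∨ A i j = 1)
    (hsparse : ∀ j, ∑ i, A i j ≤ (k : ℝ))
    (b : Fin m → ℕ) (hb : ∀ i, 1 ≤ b i)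
    (W : ℝ) (hW : 1 ≤ W) (hwidth : ∀ i, W ≤ (b i : ℝ))
    (lam : ℝ) (hlam : lam = (k : ℝ) + 1)
    (f : Finset (Fin n) → ℝ)
    (hf_nonneg : ∀ S, 0 ≤ f S)
    (hf_norm : f ∅ = 0)
    (hf_mono : ∀ S T : Finset (Fin n), S ⊆ T → f S ≤ f T)
    (hf_submod : ∀ S T : Finset (Fin n), f (S ∪ T) + f (S ∩ T) ≤ f S + f T)
    (e : ℕ → Fin n) (hinj : ∀ s < n, ∀ t < n, e s = e t → s = t)
    (E : ℕ → Finset (Fin n)) (hE : ∀ t, E t = (Finset.range t).image e)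
    (S : Finset (Fin n))
    (hgreedy : ∀ t < n, ∀ j : Fin n, j ∉ E t →
      f (insert j (S ∩ E t)) - f (S ∩ E t)
        ≤ f (insert (e t) (S ∩ E t)) - f (S ∩ E t))
    (hselect : ∀ t < n, (e t ∈ S ↔
      ∑ i, A i (e t) * (lam ^ ((∑ j ∈ S ∩ E t, A i j) / (b i : ℝ)) - 1) < lam - 1)) :
    (∀ i, ∑ j ∈ S, A i j ≤ (b i : ℝ)) ∧
      ∀ Sstar : Finset (Fin n), (∀ i, ∑ j ∈ Sstar, A i j ≤ (b i : ℝ)) →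
        f S ≥ f Sstar / (2 + 2 * W * ((k : ℝ) + 1) ^ (1 / W)) :=
  stmt_11_general m n k hk A hA hsparse b W hW hwidth lam hlam f hf_norm hf_mono hf_submod e hinj E
    hE S hgreedy hselect
end
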